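/- arXiv:1808.01418 — 2 statements merged into one kernel-verified Lean document; each statement's English description precedes it below -/
import Mathlib

section
/- (Theorem 2, consensus criterion) Let L be an N×N real symmetric positive semidefinite matrix whose kernel is spanned by the all-ones vector 1⃗, with eigenvalues 0 = λ₁ < λ₂ ≤ … ≤ λ_N. Let ε(k) be an M-periodic real gain sequence (ε(k+M) = ε(k) for all k) and set h(λ, M) = ∏_{k=0}^{M−1}(1 − ε(k)λ) and ρ* = max_{2 ≤ i ≤ N} |h(λᵢ, M)|. Then the products ∏_{k=0}^{T−1}(I − ε(k)L) converge to (1/N)·1⃗1⃗ᵀ as T → ∞ (asymptotic average consensus from every initial state) if and only if ρ* < 1. -/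
/-!
The eigenvectors `vᵢ` of `L` diagonalize every factor `I - ε(k) L` simultaneously, so the product
up to time `T` is `∑ᵢ h(λᵢ, T) vᵢ vᵢᵀ`, and the consensus matrix `(1/N) 𝟙 𝟙ᵀ` is `v₁ v₁ᵀ`.
As `vᵢᵀ A vᵢ` reads off the `i`-th coefficient of such a sum continuously, convergence means
`h(λᵢ, T) → 0` for every `i ≥ 2`. By periodicity `h(λ, qM + r) = h(λ, M) ^ q * h(λ, r)`, and the
finitely many values `h(λ, r)`, `r < M`, are bounded, so this happens iff `|h(λ, M)| < 1`.
-/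

open Matrix Finset Filter Topology

/-- The product `∏_{k=0}^{T-1} (I - ε(k) L)`, built recursively as
`P 0 = I`, `P (T+1) = (I - ε(T) L) * P T`. -/
noncomputable def consProd {N : ℕ} (L : Matrix (Fin N) (Fin N) ℝ) (ε : ℕ → ℝ) :
    ℕ → Matrix (Fin N) (Fin N) ℝ
  | 0 => 1
  | T + 1 => (1 - ε T • L) * consProd L ε T

namespace Function.Periodic

variable {R : Type*} {f : ℕ → R} {M : ℕ}

theorem prod_range_mul_add [CommMonoid R] (hf : Periodic f M) (q r : ℕ) :
    ∏ k ∈ range (q * M + r), f k = (∏ k ∈ range M, f k) ^ q * ∏ k ∈ range r, f k := by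
  induction q with
  | zero => simp
  | succ q ih =>
    have hshift : ∏ k ∈ range (q * M + r), f (M + k) = ∏ k ∈ range (q * M + r), f k :=
      prod_congr rfl fun k _ => by rw [add_comm, hf k]
    rw [show (q + 1) * M + r = M + (q * M + r) by ring, prod_range_add, hshift, ih, pow_succ',
      mul_assoc]

theorem tendsto_prod_range_nhds_zero_iff [SeminormedCommRing R] [NormMulClass R]
    (hf : Periodic f M) (hM : 0 < M) :
    Tendsto (fun T ↦ ∏ k ∈ range T, f k) atTop (𝓝 0) ↔ ‖∏ k ∈ range M, f k‖ < 1 := by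
  rw [← tendsto_pow_atTop_nhds_zero_iff_norm_lt_one]
  constructor
  · intro h
    have hpow (q : ℕ) : ∏ k ∈ range (q * M), f k = (∏ k ∈ range M, f k) ^ q := by
      simpa using hf.prod_range_mul_add q 0
    simpa only [Function.comp_def, id, hpow] using h.comp (tendsto_id.atTop_mul_const' hM)
  · intro h
    have hsplit (T : ℕ) : ∏ k ∈ range T, f k =
        (∏ k ∈ range M, f k) ^ (T / M) * ∏ k ∈ range (T % M), f k := by
      conv_lhs => rw [← Nat.div_add_mod' T M]
      exact hf.prod_range_mul_add _ _
    have hbdd (T : ℕ) :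
        ‖∏ k ∈ range (T % M), f k‖ ≤ ∑ r ∈ range M, ‖∏ k ∈ range r, f k‖ :=
      single_le_sum (f := fun r ↦ ‖∏ k ∈ range r, f k‖) (fun _ _ ↦ norm_nonneg _)
        (mem_range.mpr (Nat.mod_lt T hM))
    rw [funext hsplit]
    exact (h.comp (Nat.tendsto_div_const_atTop hM.ne')).zero_mul_isBoundedUnder_le
      (isBoundedUnder_of ⟨_, hbdd⟩)

end Function.Periodic

namespace Matrix

variable {n ι R : Type*} [Fintype n] [CommRing R]

theorem sum_vecMulVec_self_eq_one [DecidableEq n] {v : n → n → R}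
    (hv : ∀ i j, v i ⬝ᵥ v j = if i = j then 1 else 0) :
    ∑ i, vecMulVec (v i) (v i) = 1 := by
  have hrows : of v * (of v)ᵀ = 1 := by
    ext i j
    simpa [mul_apply, dotProduct, one_apply] using hv i j
  rw [← mul_eq_one_comm.mp hrows]
  ext x y
  simp [Matrix.sum_apply, vecMulVec_apply, mul_apply]

theorem sum_smul_vecMulVec_mulVec [Fintype ι] [DecidableEq ι] {v : ι → n → R}
    (hv : ∀ i j, v i ⬝ᵥ v j = if i = j then 1 else 0) (c : ι → R) (i : ι) :
    (∑ j, c j • vecMulVec (v j) (v j)) *ᵥ v i = c i • v i := by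
  simp [sum_mulVec, smul_mulVec, vecMulVec_mulVec, hv]

theorem tendsto_sum_smul_vecMulVec_iff [Fintype ι] [DecidableEq ι] [TopologicalSpace R]
    [IsTopologicalRing R] {α : Type*} {l : Filter α} {v : ι → n → R}
    (hv : ∀ i j, v i ⬝ᵥ v j = if i = j then 1 else 0) {c : ι → α → R} {d : ι → R} :
    Tendsto (fun t ↦ ∑ i, c i t • vecMulVec (v i) (v i)) l
        (𝓝 (∑ i, d i • vecMulVec (v i) (v i))) ↔ ∀ i, Tendsto (c i) l (𝓝 (d i)) := by
  refine ⟨fun h i ↦ ?_, fun h ↦ tendsto_finsetSum _ fun i _ ↦ (h i).smul_const _⟩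
  have hcoeff (e : ι → R) : v i ⬝ᵥ (∑ j, e j • vecMulVec (v j) (v j)) *ᵥ v i = e i := by
    rw [sum_smul_vecMulVec_mulVec hv, dotProduct_smul, hv, if_pos rfl, smul_eq_mul, mul_one]
  have hcont : Continuous fun A : Matrix n n R ↦ v i ⬝ᵥ A *ᵥ v i :=
    continuous_const.dotProduct (continuous_id.matrix_mulVec continuous_const)
  simpa only [Function.comp_def, hcoeff] using (hcont.tendsto _).comp h

end Matrix

theorem consProd_eq_sum_smul_vecMulVec {N : ℕ} {ι : Type*} [Fintype ι]
    {L : Matrix (Fin N) (Fin N) ℝ} {ε : ℕ → ℝ} {lam : ι → ℝ} {v : ι → Fin N → ℝ}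
    (heig : ∀ i, L *ᵥ v i = lam i • v i) (hres : ∑ i, vecMulVec (v i) (v i) = 1) (T : ℕ) :
    consProd L ε T = ∑ i, (∏ k ∈ range T, (1 - ε k * lam i)) • vecMulVec (v i) (v i) := by
  induction T with
  | zero => simpa [consProd] using hres.symm
  | succ T ih =>
    have hstep (i : ι) :
        (1 - ε T • L) * vecMulVec (v i) (v i) = (1 - ε T * lam i) • vecMulVec (v i) (v i) := by
      rw [mul_vecMulVec, sub_mulVec, one_mulVec, smul_mulVec, heig, smul_smul, ← smul_vecMulVec,
        sub_smul, one_smul]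
    rw [consProd, ih, mul_sum]
    refine sum_congr rfl fun i _ ↦ ?_
    rw [Matrix.mul_smul, hstep, smul_smul, prod_range_succ, mul_comm]

theorem stmt_6_general (N : ℕ) (hN : 2 ≤ N)
    (L : Matrix (Fin N) (Fin N) ℝ)
    (lam : Fin N → ℝ) (v : Fin N → Fin N → ℝ)
    (hlam0 : ∀ i : Fin N, (i : ℕ) = 0 → lam i = 0)
    (heig : ∀ i, L.mulVec (v i) = lam i • v i)
    (horth : ∀ i j, v i ⬝ᵥ v j = if i = j then 1 else 0)
    (hv0 : ∀ i : Fin N, (i : ℕ) = 0 → v i = fun _ => (Real.sqrt N)⁻¹)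
    (hne : (Finset.univ.filter (fun i : Fin N => (i : ℕ) ≠ 0)).Nonempty)
    (M : ℕ) (hM : 0 < M) (ε : ℕ → ℝ) (hper : ∀ k, ε (k + M) = ε k) :
    Tendsto (consProd L ε) atTop
        (nhds ((N : ℝ)⁻¹ • vecMulVec (fun _ => 1) (fun _ => 1))) ↔
      (Finset.univ.filter (fun i : Fin N => (i : ℕ) ≠ 0)).sup' hne
          (fun i => |∏ k ∈ Finset.range M, (1 - ε k * lam i)|) < 1 := by
  set i₀ : Fin N := ⟨0, by omega⟩
  have hlim : ((N : ℝ)⁻¹ • vecMulVec (fun _ ↦ 1) (fun _ ↦ 1) : Matrix (Fin N) (Fin N) ℝ) =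
      ∑ i, (Pi.single i₀ 1 : Fin N → ℝ) i • vecMulVec (v i) (v i) := by
    simp only [Pi.single_apply, ite_smul, one_smul, zero_smul, sum_ite_eq', mem_univ, if_true,
      hv0 i₀ rfl]
    ext x y
    simp [vecMulVec_apply, ← mul_inv, Real.mul_self_sqrt (Nat.cast_nonneg N)]
  rw [funext (consProd_eq_sum_smul_vecMulVec heig (sum_vecMulVec_self_eq_one horth)), hlim,
    tendsto_sum_smul_vecMulVec_iff horth, sup'_lt_iff]
  refine forall_congr' fun i ↦ ?_
  simp only [mem_filter, mem_univ, true_and]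
  by_cases hi : (i : ℕ) = 0
  · obtain rfl : i = i₀ := Fin.ext hi
    simp [hlam0 _ hi, hi]
  · have hf : Function.Periodic (fun k ↦ 1 - ε k * lam i) M := fun k ↦ by simp only [hper k]
    rw [Pi.single_eq_of_ne (fun h ↦ hi (congrArg Fin.val h)),
      hf.tendsto_prod_range_nhds_zero_iff hM, Real.norm_eq_abs]
    exact (imp_iff_right hi).symm

theorem stmt_6 (N : ℕ) (hN : 2 ≤ N)
    (L : Matrix (Fin N) (Fin N) ℝ) (hsymm : L.IsSymm) (hpsd : L.PosSemidef)
    (lam : Fin N → ℝ) (v : Fin N → Fin N → ℝ)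
    (hlam_mono : Monotone lam)
    (hlam0 : ∀ i : Fin N, (i : ℕ) = 0 → lam i = 0)
    (hlam_pos : ∀ i : Fin N, (i : ℕ) ≠ 0 → 0 < lam i)
    (heig : ∀ i, L.mulVec (v i) = lam i • v i)
    (horth : ∀ i j, v i ⬝ᵥ v j = if i = j then 1 else 0)
    (hv0 : ∀ i : Fin N, (i : ℕ) = 0 → v i = fun _ => (Real.sqrt N)⁻¹)
    (hne : (Finset.univ.filter (fun i : Fin N => (i : ℕ) ≠ 0)).Nonempty)
    (M : ℕ) (hM : 0 < M) (ε : ℕ → ℝ) (hper : ∀ k, ε (k + M) = ε k) :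
    Tendsto (consProd L ε) atTop
        (nhds ((N : ℝ)⁻¹ • vecMulVec (fun _ => 1) (fun _ => 1))) ↔
      (Finset.univ.filter (fun i : Fin N => (i : ℕ) ≠ 0)).sup' hne
          (fun i => |∏ k ∈ Finset.range M, (1 - ε k * lam i)|) < 1 :=
  stmt_6_general N hN L lam v hlam0 heig horth hv0 hne M hM ε hper
end

section
/- (Theorem 3, worst-case bound) Let 0 < α < β, let M ≥ 1, set r_k = α + (β−α)(k+1)/(M+1) for k = 0, …, M−1 and h(λ, M) = ∏_{k=0}^{M−1}(1 − λ/r_k). Then max_{λ ∈ [α, β]} |h(λ, M)| ≤ γ_M := M! / ∏_{k=1}^{M}(k + (M+1)α/(β−α)), and γ_M < 1. Consequently, for any N×N real symmetric positive semidefinite matrix L whose kernel is spanned by the all-ones vector and whose nonzero eigenvalues all lie in [α, β], the M-periodic gain sequence ε(k+jM) = 1/r_k (k = 0, …, M−1, j ≥ 0) drives ∏_{k=0}^{T−1}(I − ε(k)L) to (1/N)·1⃗1⃗ᵀ as T → ∞, with per-period convergence rate ρ_M = max_{2 ≤ i ≤ N}|h(λᵢ, M)| ≤ γ_M. -/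
/-!
Writing `x = α + c s` with `c = (β - α) / (M + 1)` and `a = (M + 1) α / (β - α)`, the nodes
become `r_k = c (k + 1 + a)`, so `h(x, M) = ∏_{k=1}^M (k - s) / (k + a)` with `s ∈ [0, M + 1]`.
On that interval `∏_{k=1}^M |s - k| ≤ M!`, which gives `|h| ≤ γ_M`, and `γ_M < 1` because
`a > 0`. The orthonormal eigenbasis of `L` turns `∏_{k<T} (I - ε(k) L)` into
`∑ᵢ (∏_{k<T} (1 - ε(k) λᵢ)) vᵢ vᵢᵀ`; the coefficient of the kernel direction is constantly `1`,
and every other coefficient is `M`-periodic with per-period factor of modulus at most `γ_M`,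
hence tends to `0`.
-/

open Matrix Finset Filter

open scoped Nat Topology

theorem prod_abs_sub_add_one_le_factorial :
    ∀ (M : ℕ) {s : ℝ}, 0 ≤ s → s ≤ M + 1 → ∏ k ∈ range M, |s - (k + 1)| ≤ M !
  | 0, _, _, _ => by simp
  | M + 1, s, hs₀, hs₁ => by
    push_cast at hs₁
    rw [Nat.factorial_succ, Nat.cast_mul, mul_comm]
    by_cases hs : s ≤ M + 1
    · rw [prod_range_succ]
      refine mul_le_mul (prod_abs_sub_add_one_le_factorial M hs₀ hs) ?_
        (abs_nonneg _) (by positivity)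
      rw [abs_le]; push_cast; constructor <;> linarith
    · rw [prod_range_succ']
      have ih := prod_abs_sub_add_one_le_factorial M (s := s - 1) (by linarith) (by linarith)
      refine mul_le_mul (le_of_eq_of_le (prod_congr rfl fun k _ => ?_) ih) ?_
        (abs_nonneg _) (by positivity)
      · push_cast; ring_nf
      · rw [abs_le]; push_cast; constructor <;> linarith

noncomputable section

-- the interpolation points `r_k` and the worst-case rate `γ_M` of the paper
def interpNode (α β : ℝ) (M k : ℕ) : ℝ := α + (β - α) * (k + 1) / (M + 1)

def worstCaseRate (α β : ℝ) (M : ℕ) : ℝ :=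
  M ! / ∏ k ∈ Icc 1 M, ((k : ℝ) + (M + 1) * α / (β - α))

end

section Interpolation

variable {α β : ℝ} (M : ℕ)

theorem worstCaseRate_eq :
    worstCaseRate α β M = M ! / ∏ k ∈ range M, ((k : ℝ) + 1 + (M + 1) * α / (β - α)) := by
  rw [worstCaseRate, ← Ico_add_one_right_eq_Icc, prod_Ico_eq_prod_range, Nat.add_sub_cancel]
  exact congrArg _ (prod_congr rfl fun k _ => by push_cast; ring)

variable (hα : 0 < α) (hαβ : α < β)
include hα hαβ

theorem worstCaseRate_lt_one (hM : 1 ≤ M) : worstCaseRate α β M < 1 := by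
  have ha : 0 < (M + 1) * α / (β - α) := div_pos (by positivity) (by linarith)
  have hlt : (M ! : ℝ) < ∏ k ∈ range M, ((k : ℝ) + 1 + (M + 1) * α / (β - α)) := by
    rw [← prod_range_add_one_eq_factorial, Nat.cast_prod]
    refine prod_lt_prod_of_nonempty (fun k _ => by positivity) (fun k _ => ?_)
      (nonempty_range_iff.mpr (by omega))
    push_cast; linarith
  rw [worstCaseRate_eq]
  exact (div_lt_one (by positivity)).mpr hlt

theorem abs_prod_one_sub_div_interpNode_le {x : ℝ} (hx : x ∈ Set.Icc α β) :
    |∏ k ∈ range M, (1 - x / interpNode α β M k)| ≤ worstCaseRate α β M := by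
  set c := (β - α) / (M + 1)
  set a := (M + 1) * α / (β - α)
  set s := (x - α) / c
  have hβα : β - α ≠ 0 := sub_ne_zero.mpr hαβ.ne'
  have hc : 0 < c := div_pos (by linarith) (by positivity)
  have ha : 0 < a := div_pos (by positivity) (by linarith)
  have hca : c * a = α := by simp only [c, a]; field_simp
  have hx_eq : x = c * a + c * s := by simp only [s]; field_simp; linarith
  have hfactor : ∀ k : ℕ, 1 - x / interpNode α β M k = ((k + 1) - s) / (k + 1 + a) := by
    intro k
    have hnode : interpNode α β M k = c * (k + 1 + a) := by
      rw [mul_add, hca, interpNode]; ring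
    have hden : (k : ℝ) + 1 + a ≠ 0 := by positivity
    rw [hnode, hx_eq]
    field_simp
    ring
  have hs₀ : 0 ≤ s := div_nonneg (by linarith [hx.1]) hc.le
  have hs₁ : s ≤ M + 1 := by
    rw [div_le_iff₀ hc]
    simp only [c]
    field_simp
    linarith [hx.2]
  calc |∏ k ∈ range M, (1 - x / interpNode α β M k)|
      = (∏ k ∈ range M, |s - (k + 1)|) / ∏ k ∈ range M, ((k : ℝ) + 1 + a) := by
        simp only [hfactor, abs_prod, ← prod_div_distrib]
        refine prod_congr rfl fun k _ => ?_
        rw [abs_div, abs_of_pos (show (0 : ℝ) < k + 1 + a by positivity), abs_sub_comm]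
    _ ≤ M ! / ∏ k ∈ range M, ((k : ℝ) + 1 + a) := by
        gcongr
        exact prod_abs_sub_add_one_le_factorial M hs₀ hs₁
    _ = worstCaseRate α β M := (worstCaseRate_eq M).symm

end Interpolation

theorem Function.periodic_of_eq_on_residues {γ : Type*} {f g : ℕ → γ} {M : ℕ}
    (h : ∀ j k, k < M → f (k + j * M) = g k) : Function.Periodic f M := by
  intro n
  rcases Nat.eq_zero_or_pos M with rfl | hM
  · rfl
  have hn := h (n / M) (n % M) (Nat.mod_lt n hM)
  have hnM := h (n / M + 1) (n % M) (Nat.mod_lt n hM)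
  rw [Nat.mod_add_div'] at hn
  rw [add_mul, one_mul, ← add_assoc, Nat.mod_add_div'] at hnM
  rw [hn, hnM]

theorem Function.Periodic.prod_range_add_mul {R : Type*} [CommMonoid R] {f : ℕ → R} {M : ℕ}
    (hf : Function.Periodic f M) (n q : ℕ) :
    ∏ k ∈ range (n + M * q), f k = (∏ k ∈ range M, f k) ^ q * ∏ k ∈ range n, f k := by
  induction q with
  | zero => simp
  | succ q ih =>
    rw [Nat.mul_succ, show n + (M * q + M) = M + (n + M * q) by ring, prod_range_add]
    simp only [fun x => show f (M + x) = f x by rw [add_comm, hf], ih, pow_succ', mul_assoc]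

theorem Function.Periodic.tendsto_prod_range_zero {𝕜 : Type*} [NormedField 𝕜] {f : ℕ → 𝕜}
    {M : ℕ} (hf : Function.Periodic f M) (hp : ‖∏ k ∈ range M, f k‖ < 1) :
    Tendsto (fun T => ∏ k ∈ range T, f k) atTop (𝓝 0) := by
  have hM : M ≠ 0 := by rintro rfl; simp at hp
  set C := ∑ r ∈ range M, ‖∏ k ∈ range r, f k‖
  have hbound : ∀ T, ‖∏ k ∈ range T, f k‖ ≤ ‖∏ k ∈ range M, f k‖ ^ (T / M) * C := by
    intro T
    calc ‖∏ k ∈ range T, f k‖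
        = ‖∏ k ∈ range M, f k‖ ^ (T / M) * ‖∏ k ∈ range (T % M), f k‖ := by
          conv_lhs => rw [← Nat.mod_add_div T M]
          rw [hf.prod_range_add_mul, norm_mul, norm_pow]
      _ ≤ ‖∏ k ∈ range M, f k‖ ^ (T / M) * C := by
          gcongr
          exact single_le_sum (f := fun r => ‖∏ k ∈ range r, f k‖) (fun r _ => norm_nonneg _)
            (mem_range.mpr (Nat.mod_lt T (Nat.pos_of_ne_zero hM)))
  have hlim : Tendsto (fun T => ‖∏ k ∈ range M, f k‖ ^ (T / M) * C) atTop (𝓝 0) := by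
    simpa using ((tendsto_pow_atTop_nhds_zero_of_lt_one (norm_nonneg _) hp).comp
      (Nat.tendsto_div_const_atTop hM)).mul_const C
  exact squeeze_zero_norm hbound hlim

theorem Matrix.sum_vecMulVec_self_eq_one_s9 {ι R : Type*} [Fintype ι] [DecidableEq ι] [CommRing R]
    (v : ι → ι → R) (horth : ∀ i j, v i ⬝ᵥ v j = if i = j then 1 else 0) :
    ∑ i, vecMulVec (v i) (v i) = 1 := by
  have hrows : of v * (of v)ᵀ = 1 := by
    ext i j
    exact horth i j
  calc ∑ i, vecMulVec (v i) (v i) = (of v)ᵀ * of v := by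
        ext a b
        simp [mul_apply, sum_apply, vecMulVec_apply]
    _ = 1 := mul_eq_one_comm.mp hrows

theorem consProd_eq_sum {N : ℕ} {L : Matrix (Fin N) (Fin N) ℝ} (ε : ℕ → ℝ) {lam : Fin N → ℝ}
    {v : Fin N → Fin N → ℝ} (heig : ∀ i, L *ᵥ v i = lam i • v i)
    (horth : ∀ i j, v i ⬝ᵥ v j = if i = j then 1 else 0) (T : ℕ) :
    consProd L ε T = ∑ i, (∏ k ∈ range T, (1 - ε k * lam i)) • vecMulVec (v i) (v i) := by
  induction T with
  | zero => simp [consProd, sum_vecMulVec_self_eq_one_s9 v horth]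
  | succ T ih =>
    rw [consProd, ih, mul_sum]
    refine sum_congr rfl fun i _ => ?_
    rw [prod_range_succ, sub_mul, one_mul, Matrix.smul_mul, Matrix.mul_smul, mul_vecMulVec,
      heig i, smul_vecMulVec]
    module

theorem stmt_9_general (α β : ℝ) (hα : 0 < α) (hαβ : α < β) (M : ℕ) (hM : 1 ≤ M)
    (N : ℕ)
    (L : Matrix (Fin N) (Fin N) ℝ)
    (lam : Fin N → ℝ) (v : Fin N → Fin N → ℝ)
    (hlam0 : ∀ i : Fin N, (i : ℕ) = 0 → lam i = 0)
    (heig : ∀ i, L.mulVec (v i) = lam i • v i)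
    (horth : ∀ i j, v i ⬝ᵥ v j = if i = j then 1 else 0)
    (hv0 : ∀ i : Fin N, (i : ℕ) = 0 → v i = fun _ => (Real.sqrt N)⁻¹)
    (hne : (Finset.univ.filter (fun i : Fin N => (i : ℕ) ≠ 0)).Nonempty)
    -- all nonzero eigenvalues lie in [α, β]
    (hspec : ∀ i : Fin N, (i : ℕ) ≠ 0 → lam i ∈ Set.Icc α β)
    -- the M-periodic gain sequence ε(k + jM) = 1/r_k with r_k = α + (β-α)(k+1)/(M+1)
    (ε : ℕ → ℝ)
    (hε : ∀ j k, k < M → ε (k + j * M) = (α + (β - α) * (k + 1) / (M + 1))⁻¹) :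
    (∀ x ∈ Set.Icc α β,
        |∏ k ∈ Finset.range M, (1 - x / (α + (β - α) * (k + 1) / (M + 1)))| ≤
          (Nat.factorial M : ℝ) /
            ∏ k ∈ Finset.Icc 1 M, ((k : ℝ) + (M + 1) * α / (β - α))) ∧
    (Nat.factorial M : ℝ) / (∏ k ∈ Finset.Icc 1 M, ((k : ℝ) + (M + 1) * α / (β - α))) < 1 ∧
    Tendsto (consProd L ε) atTop
      (nhds ((N : ℝ)⁻¹ • vecMulVec (fun _ => 1) (fun _ => 1))) ∧
    (Finset.univ.filter (fun i : Fin N => (i : ℕ) ≠ 0)).sup' hne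
        (fun i => |∏ k ∈ Finset.range M, (1 - ε k * lam i)|) ≤
      (Nat.factorial M : ℝ) / ∏ k ∈ Finset.Icc 1 M, ((k : ℝ) + (M + 1) * α / (β - α)) := by
  have hε_per : Function.Periodic ε M := Function.periodic_of_eq_on_residues hε
  have hε_node : ∀ k < M, ε k = (interpNode α β M k)⁻¹ := fun k hk => by
    simpa [interpNode] using hε 0 k hk
  have hrate : ∀ i : Fin N, (i : ℕ) ≠ 0 →
      |∏ k ∈ range M, (1 - ε k * lam i)| ≤ worstCaseRate α β M := fun i hi => by
    convert abs_prod_one_sub_div_interpNode_le M hα hαβ (hspec i hi) using 4 with k hk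
    rw [hε_node k (mem_range.mp hk), inv_mul_eq_div]
  refine ⟨fun x hx => abs_prod_one_sub_div_interpNode_le M hα hαβ hx,
    worstCaseRate_lt_one M hα hαβ hM, ?_,
    sup'_le hne _ fun i hi => hrate i (mem_filter.mp hi).2⟩
  obtain ⟨i₁, -⟩ := hne
  set i₀ : Fin N := ⟨0, i₁.pos⟩
  have hcoef : ∀ i, Tendsto (fun T => ∏ k ∈ range T, (1 - ε k * lam i)) atTop
      (𝓝 (if i = i₀ then 1 else 0)) := by
    intro i
    split_ifs with hi
    · simp [hi, hlam0 i₀ rfl]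
    · exact Function.Periodic.tendsto_prod_range_zero (fun n => by simp only [hε_per n])
        ((hrate i fun h => hi (Fin.ext h)).trans_lt (worstCaseRate_lt_one M hα hαβ hM))
  have hproj : vecMulVec (v i₀) (v i₀) = (N : ℝ)⁻¹ • vecMulVec (fun _ => 1) (fun _ => 1) := by
    ext a b
    simp [hv0 i₀ rfl, vecMulVec_apply, ← mul_inv, Real.mul_self_sqrt (Nat.cast_nonneg N)]
  simpa [funext (consProd_eq_sum ε heig horth), ite_smul, hproj] using
    tendsto_finsetSum univ fun i _ => (hcoef i).smul_const (vecMulVec (v i) (v i))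

theorem stmt_9 (α β : ℝ) (hα : 0 < α) (hαβ : α < β) (M : ℕ) (hM : 1 ≤ M)
    (N : ℕ) (hN : 2 ≤ N)
    (L : Matrix (Fin N) (Fin N) ℝ) (hsymm : L.IsSymm) (hpsd : L.PosSemidef)
    (lam : Fin N → ℝ) (v : Fin N → Fin N → ℝ)
    (hlam_mono : Monotone lam)
    (hlam0 : ∀ i : Fin N, (i : ℕ) = 0 → lam i = 0)
    (hlam_pos : ∀ i : Fin N, (i : ℕ) ≠ 0 → 0 < lam i)
    (heig : ∀ i, L.mulVec (v i) = lam i • v i)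
    (horth : ∀ i j, v i ⬝ᵥ v j = if i = j then 1 else 0)
    (hv0 : ∀ i : Fin N, (i : ℕ) = 0 → v i = fun _ => (Real.sqrt N)⁻¹)
    (hne : (Finset.univ.filter (fun i : Fin N => (i : ℕ) ≠ 0)).Nonempty)
    -- all nonzero eigenvalues lie in [α, β]
    (hspec : ∀ i : Fin N, (i : ℕ) ≠ 0 → lam i ∈ Set.Icc α β)
    -- the M-periodic gain sequence ε(k + jM) = 1/r_k with r_k = α + (β-α)(k+1)/(M+1)
    (ε : ℕ → ℝ)
    (hε : ∀ j k, k < M → ε (k + j * M) = (α + (β - α) * (k + 1) / (M + 1))⁻¹) :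
    (∀ x ∈ Set.Icc α β,
        |∏ k ∈ Finset.range M, (1 - x / (α + (β - α) * (k + 1) / (M + 1)))| ≤
          (Nat.factorial M : ℝ) /
            ∏ k ∈ Finset.Icc 1 M, ((k : ℝ) + (M + 1) * α / (β - α))) ∧
    (Nat.factorial M : ℝ) / (∏ k ∈ Finset.Icc 1 M, ((k : ℝ) + (M + 1) * α / (β - α))) < 1 ∧
    Tendsto (consProd L ε) atTop
      (nhds ((N : ℝ)⁻¹ • vecMulVec (fun _ => 1) (fun _ => 1))) ∧
    (Finset.univ.filter (fun i : Fin N => (i : ℕ) ≠ 0)).sup' hne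
        (fun i => |∏ k ∈ Finset.range M, (1 - ε k * lam i)|) ≤
      (Nat.factorial M : ℝ) / ∏ k ∈ Finset.Icc 1 M, ((k : ℝ) + (M + 1) * α / (β - α)) :=
  stmt_9_general α β hα hαβ M hM N L lam v hlam0 heig horth hv0 hne hspec ε hε
end
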